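/- For a nonnegative integrable function f on X, a measurable set Λ in a metric space M, δ > 0, and measurable maps λ, λ' : X → M, one has ∫ f·|1_Λ(λ(x)) - 1_Λ(λ'(x))| dμ ≤ ∫ f·1[max(d(λ'(x),Λ), d(λ'(x),Λᶜ)) ≤ δ] dμ + (2/δ)·∫ f·d(λ(x), λ'(x)) dμ. -/
import Mathlib


open MeasureTheory
open scoped Classical

theorem stmt4 {X M : Type*} [MeasurableSpace X] [MetricSpace M]
    [MeasurableSpace M] [BorelSpace M]
    (μ : Measure X) (Λ : Set M) (hΛ : MeasurableSet Λ)
    (f : X → ℝ) (hf0 : ∀ x, 0 ≤ f x) (hf : Integrable f μ)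
    (l l' : X → M) (hl : Measurable l) (hl' : Measurable l')
    (δ : ℝ) (hδ : 0 < δ)
    (hfd : Integrable (fun x => f x * dist (l x) (l' x)) μ) :
    ∫ x, f x * |(if l x ∈ Λ then (1:ℝ) else 0) - (if l' x ∈ Λ then (1:ℝ) else 0)| ∂μ
      ≤ (∫ x, f x * (if max (Metric.infDist (l' x) Λ) (Metric.infDist (l' x) Λᶜ) ≤ δ
            then (1:ℝ) else 0) ∂μ)
        + (2 / δ) * ∫ x, f x * dist (l x) (l' x) ∂μ := by
  have hm1 : Measurable fun x =>
      |(if l x ∈ Λ then (1:ℝ) else 0) - (if l' x ∈ Λ then (1:ℝ) else 0)| := by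
    apply Measurable.abs
    exact ((Measurable.ite (hl hΛ) measurable_const measurable_const).sub
      (Measurable.ite (hl' hΛ) measurable_const measurable_const))
  have hm2 : Measurable fun x =>
      (if max (Metric.infDist (l' x) Λ) (Metric.infDist (l' x) Λᶜ) ≤ δ then (1:ℝ) else 0) := by
    apply Measurable.ite _ measurable_const measurable_const
    apply measurableSet_le _ measurable_const
    exact ((Metric.continuous_infDist_pt Λ).measurable.comp hl').max
      ((Metric.continuous_infDist_pt Λᶜ).measurable.comp hl')
  have hg1 : Integrable (fun x =>
      f x * |(if l x ∈ Λ then (1:ℝ) else 0) - (if l' x ∈ Λ then (1:ℝ) else 0)|) μ := by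
    apply hf.mono (hf.aestronglyMeasurable.mul hm1.aestronglyMeasurable)
    filter_upwards with x
    simp only [Pi.mul_apply, Real.norm_eq_abs, abs_mul, abs_abs, abs_of_nonneg (hf0 x)]
    have h1 : |(if l x ∈ Λ then (1:ℝ) else 0) - (if l' x ∈ Λ then (1:ℝ) else 0)| ≤ 1 := by
      split_ifs <;> simp
    nlinarith [hf0 x]
  have hg2 : Integrable (fun x =>
      f x * (if max (Metric.infDist (l' x) Λ) (Metric.infDist (l' x) Λᶜ) ≤ δ
        then (1:ℝ) else 0)) μ := by
    apply hf.mono (hf.aestronglyMeasurable.mul hm2.aestronglyMeasurable)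
    filter_upwards with x
    simp only [Pi.mul_apply, Real.norm_eq_abs, abs_mul, abs_of_nonneg (hf0 x)]
    have h1 : |(if max (Metric.infDist (l' x) Λ) (Metric.infDist (l' x) Λᶜ) ≤ δ
        then (1:ℝ) else 0)| ≤ 1 := by split_ifs <;> simp
    nlinarith [hf0 x]
  have hg3 : Integrable (fun x => (2/δ) * (f x * dist (l x) (l' x))) μ := hfd.const_mul _
  have key : ∀ x, f x * |(if l x ∈ Λ then (1:ℝ) else 0) - (if l' x ∈ Λ then (1:ℝ) else 0)|
      ≤ f x * (if max (Metric.infDist (l' x) Λ) (Metric.infDist (l' x) Λᶜ) ≤ δ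
          then (1:ℝ) else 0) + (2/δ) * (f x * dist ( l x) (l' x)) := by
    intro x
    have hd0 : (0:ℝ) ≤ dist (l x) (l' x) := dist_nonneg
    have hfx := hf0 x
    have h3 : (0:ℝ) ≤ (2/δ) * (f x * dist (l x) (l' x)) := by positivity
    have h2 : (0:ℝ) ≤ f x * (if max (Metric.infDist (l' x) Λ) (Metric.infDist (l' x) Λᶜ) ≤ δ
        then (1:ℝ) else 0) := by split_ifs <;> simp [hfx]
    by_cases ha : l x ∈ Λ <;> by_cases hb : l' x ∈ Λ
    · simp only [ha, hb, if_true, sub_self, abs_zero, mul_zero]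
      linarith
    · -- a ∈ Λ, b ∉ Λ
      rw [if_pos ha, if_neg hb, sub_zero, abs_one, mul_one]
      by_cases hmax : max (Metric.infDist (l' x) Λ) (Metric.infDist (l' x) Λᶜ) ≤ δ
      · rw [if_pos hmax, mul_one]
        linarith
      · rw [if_neg hmax, mul_zero, zero_add]
        push_neg at hmax
        have hz : Metric.infDist (l' x) Λᶜ = 0 := Metric.infDist_zero_of_mem hb
        have h1 : δ < Metric.infDist (l' x) Λ := by
          rcases lt_max_iff.mp hmax with h | h
          · exact h
          · linarith
        have h2' : Metric.infDist (l' x) Λ ≤ dist (l' x) (l x) := Metric.infDist_le_dist_of_mem ha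
        rw [dist_comm] at h2'
        have hδd : δ ≤ dist (l x) (l' x) := le_of_lt (lt_of_lt_of_le h1 h2')
        rw [div_mul_eq_mul_div, le_div_iff₀ hδ]
        nlinarith
    · -- a ∉ Λ, b ∈ Λ
      rw [if_neg ha, if_pos hb, zero_sub, abs_neg, abs_one, mul_one]
      by_cases hmax : max (Metric.infDist (l' x) Λ) (Metric.infDist (l' x) Λᶜ) ≤ δ
      · rw [if_pos hmax, mul_one]
        linarith
      · rw [if_neg hmax, mul_zero, zero_add]
        push_neg at hmax
        have hz : Metric.infDist (l' x) Λ = 0 := Metric.infDist_zero_of_mem hb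
        have h1 : δ < Metric.infDist (l' x) Λᶜ := by
          rcases lt_max_iff.mp hmax with h | h
          · linarith
          · exact h
        have h2' : Metric.infDist (l' x) Λᶜ ≤ dist (l' x) (l x) :=
          Metric.infDist_le_dist_of_mem ha
        rw [dist_comm] at h2'
        have hδd : δ ≤ dist (l x) (l' x) := le_of_lt (lt_of_lt_of_le h1 h2')
        rw [div_mul_eq_mul_div, le_div_iff₀ hδ]
        nlinarith
    · simp only [ha, hb, if_false, sub_self, abs_zero, mul_zero]
      linarith
  calc ∫ x, f x * |(if l x ∈ Λ then (1:ℝ) else 0) - (if l' x ∈ Λ then (1:ℝ) else 0)| ∂μ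
      ≤ ∫ x, (f x * (if max (Metric.infDist (l' x) Λ) (Metric.infDist (l' x) Λᶜ) ≤ δ
          then (1:ℝ) else 0) + (2/δ) * (f x * dist (l x) (l' x))) ∂μ :=
        integral_mono hg1 (hg2.add hg3) key
    _ = (∫ x, f x * (if max (Metric.infDist (l' x) Λ) (Metric.infDist (l' x) Λᶜ) ≤ δ
          then (1:ℝ) else 0) ∂μ) + ∫ x, (2/δ) * (f x * dist (l x) (l' x)) ∂μ :=
        integral_add hg2 hg3
    _ = _ := by rw [integral_const_mul]
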